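/- arXiv:2206.04736 — 7 statements merged into one kernel-verified Lean document; each statement's English description precedes it below -/
import Mathlib

section
/- For $j = 1,2$, let $M_j \in \mathbb{R}^{N_j \times N_j}$ be symmetric positive definite, $G_j \in \mathbb{R}^{N_\gamma \times N_j}$, and let $\widetilde{U}_{j,0} \in \mathbb{R}^{N_j \times N_{R,j}}$ have linearly independent columns. Set $\widetilde{M}_j := \widetilde{U}_{j,0}^T M_j \widetilde{U}_{j,0}$ and $\widetilde{G}_j := G_j \widetilde{U}_{j,0}$, and suppose $\widetilde{G}_1$ has full row rank ($\operatorname{rank} \widetilde{G}_1 = N_\gamma$). Then the ROM-ROM Schur complement $\widetilde{S} := \widetilde{G}_1 \widetilde{M}_1^{-1} \widetilde{G}_1^T + \widetilde{G}_2 \widetilde{M}_2^{-1} \widetilde{G}_2^T$ is symmetric positive definite; in particular, $\widetilde{S}$ is nonsingular. -/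
open Matrix

namespace Matrix

variable {m n K : Type*} [Fintype m] [Fintype n] [Field K]

theorem linearIndependent_row_of_rank_eq_card {A : Matrix m n K}
    (hA : A.rank = Fintype.card m) : LinearIndependent K A.row := by
  rw [linearIndependent_iff_card_eq_finrank_span, Set.finrank, ← rank_eq_finrank_span_row, hA]

theorem PosDef.mul_inv_mul_conjTranspose_of_rank_eq_card [DecidableEq n]
    [PartialOrder K] [StarRing K] {M : Matrix n n K}
    (hM : M.PosDef) {G : Matrix m n K} (hG : G.rank = Fintype.card m) :
    (G * M⁻¹ * Gᴴ).PosDef :=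
  hM.inv.mul_mul_conjTranspose_same <|
    vecMul_injective_iff.mpr (linearIndependent_row_of_rank_eq_card hG)

end Matrix

theorem rom_rom_schur_complement_posDef_general
    {N1 N2 Nγ NR1 NR2 : ℕ}
    (M1 : Matrix (Fin N1) (Fin N1) ℝ) (M2 : Matrix (Fin N2) (Fin N2) ℝ)
    (G1 : Matrix (Fin Nγ) (Fin N1) ℝ) (G2 : Matrix (Fin Nγ) (Fin N2) ℝ)
    (U1 : Matrix (Fin N1) (Fin NR1) ℝ) (U2 : Matrix (Fin N2) (Fin NR2) ℝ)
    (hM1 : M1.PosDef) (hM2 : M2.PosDef)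
    (hU1 : LinearIndependent ℝ (fun j : Fin NR1 => fun i : Fin N1 => U1 i j))
    (hG1 : (G1 * U1).rank = Nγ) :
    ((G1 * U1) * (U1ᵀ * M1 * U1)⁻¹ * (G1 * U1)ᵀ
      + (G2 * U2) * (U2ᵀ * M2 * U2)⁻¹ * (G2 * U2)ᵀ).PosDef ∧
      IsUnit ((G1 * U1) * (U1ᵀ * M1 * U1)⁻¹ * (G1 * U1)ᵀ
      + (G2 * U2) * (U2ᵀ * M2 * U2)⁻¹ * (G2 * U2)ᵀ).det := by
  simp only [← conjTranspose_eq_transpose_of_trivial]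
  have hM1' : (U1ᴴ * M1 * U1).PosDef :=
    hM1.conjTranspose_mul_mul_same (mulVec_injective_iff.mpr hU1)
  have hS1 : ((G1 * U1) * (U1ᴴ * M1 * U1)⁻¹ * (G1 * U1)ᴴ).PosDef :=
    hM1'.mul_inv_mul_conjTranspose_of_rank_eq_card (by rw [hG1, Fintype.card_fin])
  -- Holds even for singular `M̃₂`, whose `⁻¹` is the junk value `0`.
  have hS2 : ((G2 * U2) * (U2ᴴ * M2 * U2)⁻¹ * (G2 * U2)ᴴ).PosSemidef :=
    (hM2.posSemidef.conjTranspose_mul_mul_same U2).inv.mul_mul_conjTranspose_same _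
  have hS := hS1.add_posSemidef hS2
  exact ⟨hS, (isUnit_iff_isUnit_det _).mp hS.isUnit⟩

/-- The ROM-ROM Schur complement `S̃ = G̃₁ M̃₁⁻¹ G̃₁ᵀ + G̃₂ M̃₂⁻¹ G̃₂ᵀ`, with
`M̃ⱼ = Ũⱼ₀ᵀ Mⱼ Ũⱼ₀` and `G̃ⱼ = Gⱼ Ũⱼ₀`, is symmetric positive definite (hence
nonsingular) when `M₁, M₂` are SPD, the `Ũⱼ₀` have linearly independent columns,
and `G̃₁` has full row rank. -/
theorem rom_rom_schur_complement_posDef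
    {N1 N2 Nγ NR1 NR2 : ℕ}
    (M1 : Matrix (Fin N1) (Fin N1) ℝ) (M2 : Matrix (Fin N2) (Fin N2) ℝ)
    (G1 : Matrix (Fin Nγ) (Fin N1) ℝ) (G2 : Matrix (Fin Nγ) (Fin N2) ℝ)
    (U1 : Matrix (Fin N1) (Fin NR1) ℝ) (U2 : Matrix (Fin N2) (Fin NR2) ℝ)
    (hM1 : M1.PosDef) (hM2 : M2.PosDef)
    (hU1 : LinearIndependent ℝ (fun j : Fin NR1 => fun i : Fin N1 => U1 i j))
    (hU2 : LinearIndependent ℝ (fun j : Fin NR2 => fun i : Fin N2 => U2 i j))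
    (hG1 : (G1 * U1).rank = Nγ) :
    ((G1 * U1) * (U1ᵀ * M1 * U1)⁻¹ * (G1 * U1)ᵀ
      + (G2 * U2) * (U2ᵀ * M2 * U2)⁻¹ * (G2 * U2)ᵀ).PosDef ∧
      IsUnit ((G1 * U1) * (U1ᵀ * M1 * U1)⁻¹ * (G1 * U1)ᵀ
      + (G2 * U2) * (U2ᵀ * M2 * U2)⁻¹ * (G2 * U2)ᵀ).det :=
  rom_rom_schur_complement_posDef_general M1 M2 G1 G2 U1 U2 hM1 hM2 hU1 hG1
end

section
/- Let $M_1, M_2$ be invertible matrices, $G_1 \in \mathbb{R}^{N_\gamma \times N_1}$, $G_2 \in \mathbb{R}^{N_\gamma \times N_2}$, suppose $S := G_1 M_1^{-1} G_1^T + G_2 M_2^{-1} G_2^T$ is invertible, let $\overline{\mathbf{f}}_i : \mathbb{R}^{N_i} \to \mathbb{R}^{N_i}$ be given functions, and define $\lambda(\Phi_1, \Phi_2) := S^{-1}(G_1 M_1^{-1} \overline{\mathbf{f}}_1(\Phi_1) - G_2 M_2^{-1} \overline{\mathbf{f}}_2(\Phi_2))$. Let $\Phi_1 : [0,T] \to \mathbb{R}^{N_1}$,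 $\Phi_2 : [0,T] \to \mathbb{R}^{N_2}$ be differentiable. Then the pair $(\Phi_1, \Phi_2)$ solves the decoupled ODE system $M_1 \dot{\Phi}_1 = \overline{\mathbf{f}}_1(\Phi_1) - G_1^T \lambda(\Phi_1, \Phi_2)$, $M_2 \dot{\Phi}_2 = \overline{\mathbf{f}}_2(\Phi_2) + G_2^T \lambda(\Phi_1, \Phi_2)$ on $[0,T]$ if and only if there exists a function $\mu : [0,T] \to \mathbb{R}^{N_\gamma}$ such that $(\Phi_1, \Phi_2, \mu)$ solves the index-1 DAE $M_1 \dot{\Phi}_1 + G_1^T \mu = \overline{\mathbf{f}}_1(\Phi_1)$, $M_2 \dot{\Phi}_2 - G_2^T \mu = \overline{\mathbf{f}}_2(\Phi_2)$, $G_1 \dot{\Phi}_1 - G_2 \dot{\Phi}_2 = 0$ on $[0,T]$; moreover in that case $\mu(t) = \lambda(\Phi_1(t), \Phi_2(t))$ for all $t \in [0,T]$. -/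
open Matrix Set

lemma ivr_key {N1 N2 Nγ : ℕ}
    (M1 : Matrix (Fin N1) (Fin N1) ℝ) (M2 : Matrix (Fin N2) (Fin N2) ℝ)
    (G1 : Matrix (Fin Nγ) (Fin N1) ℝ) (G2 : Matrix (Fin Nγ) (Fin N2) ℝ)
    (hM1 : IsUnit M1.det) (hM2 : IsUnit M2.det)
    (hS : IsUnit (G1 * M1⁻¹ * G1ᵀ + G2 * M2⁻¹ * G2ᵀ).det)
    (v1 w1 : Fin N1 → ℝ) (v2 w2 : Fin N2 → ℝ)
    (m : Fin Nγ → ℝ)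
    (h1 : M1 *ᵥ v1 + G1ᵀ *ᵥ m = w1)
    (h2 : M2 *ᵥ v2 - G2ᵀ *ᵥ m = w2)
    (h3 : G1 *ᵥ v1 - G2 *ᵥ v2 = 0) :
    m = (G1 * M1⁻¹ * G1ᵀ + G2 * M2⁻¹ * G2ᵀ)⁻¹ *ᵥ
        (G1 *ᵥ (M1⁻¹ *ᵥ w1) - G2 *ᵥ (M2⁻¹ *ᵥ w2)) := by
  have e : G1 *ᵥ (M1⁻¹ *ᵥ w1) - G2 *ᵥ (M2⁻¹ *ᵥ w2)
      = (G1 * M1⁻¹ * G1ᵀ + G2 * M2⁻¹ * G2ᵀ) *ᵥ m := by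
    rw [← h1, ← h2]
    simp only [Matrix.mulVec_add, Matrix.mulVec_sub, Matrix.mulVec_mulVec,
      Matrix.add_mulVec, Matrix.nonsing_inv_mul _ hM1, Matrix.nonsing_inv_mul _ hM2,
      Matrix.one_mulVec, ← Matrix.mul_assoc]
    rw [sub_eq_zero.mp h3]
    abel
  rw [e, Matrix.mulVec_mulVec, Matrix.nonsing_inv_mul _ hS, Matrix.one_mulVec]


/-- Equivalence of the decoupled ODE system (with the Lagrange multiplier expressed
as the implicit function `λ(Φ₁,Φ₂)` of the states) and the index-1 DAE; moreover any
multiplier in the DAE equals `λ(Φ₁(t),Φ₂(t))`. -/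
theorem ivr_decoupled_iff_dae
    {N1 N2 Nγ : ℕ}
    (M1 : Matrix (Fin N1) (Fin N1) ℝ) (M2 : Matrix (Fin N2) (Fin N2) ℝ)
    (G1 : Matrix (Fin Nγ) (Fin N1) ℝ) (G2 : Matrix (Fin Nγ) (Fin N2) ℝ)
    (hM1 : IsUnit M1.det) (hM2 : IsUnit M2.det)
    (hS : IsUnit (G1 * M1⁻¹ * G1ᵀ + G2 * M2⁻¹ * G2ᵀ).det)
    (f1 : (Fin N1 → ℝ) → (Fin N1 → ℝ)) (f2 : (Fin N2 → ℝ) → (Fin N2 → ℝ))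
    (lam : (Fin N1 → ℝ) → (Fin N2 → ℝ) → (Fin Nγ → ℝ))
    (hlam : ∀ p1 p2, lam p1 p2 = (G1 * M1⁻¹ * G1ᵀ + G2 * M2⁻¹ * G2ᵀ)⁻¹ *ᵥ
        (G1 *ᵥ (M1⁻¹ *ᵥ f1 p1) - G2 *ᵥ (M2⁻¹ *ᵥ f2 p2)))
    (T : ℝ) (hT : 0 < T)
    (Φ1 : ℝ → Fin N1 → ℝ) (Φ2 : ℝ → Fin N2 → ℝ)
    (Φ1' : ℝ → Fin N1 → ℝ) (Φ2' : ℝ → Fin N2 → ℝ)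
    (hΦ1 : ∀ t ∈ Icc (0:ℝ) T, HasDerivAt Φ1 (Φ1' t) t)
    (hΦ2 : ∀ t ∈ Icc (0:ℝ) T, HasDerivAt Φ2 (Φ2' t) t) :
    ((∀ t ∈ Icc (0:ℝ) T,
        M1 *ᵥ Φ1' t = f1 (Φ1 t) - G1ᵀ *ᵥ lam (Φ1 t) (Φ2 t) ∧
        M2 *ᵥ Φ2' t = f2 (Φ2 t) + G2ᵀ *ᵥ lam (Φ1 t) (Φ2 t)) ↔
      (∃ μ : ℝ → Fin Nγ → ℝ, ∀ t ∈ Icc (0:ℝ) T,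
        M1 *ᵥ Φ1' t + G1ᵀ *ᵥ μ t = f1 (Φ1 t) ∧
        M2 *ᵥ Φ2' t - G2ᵀ *ᵥ μ t = f2 (Φ2 t) ∧
        G1 *ᵥ Φ1' t - G2 *ᵥ Φ2' t = 0)) ∧
    (∀ μ : ℝ → Fin Nγ → ℝ,
      (∀ t ∈ Icc (0:ℝ) T,
        M1 *ᵥ Φ1' t + G1ᵀ *ᵥ μ t = f1 (Φ1 t) ∧
        M2 *ᵥ Φ2' t - G2ᵀ *ᵥ μ t = f2 (Φ2 t) ∧
        G1 *ᵥ Φ1' t - G2 *ᵥ Φ2' t = 0) →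
      ∀ t ∈ Icc (0:ℝ) T, μ t = lam (Φ1 t) (Φ2 t)) := by
  have huniq : ∀ μ : ℝ → Fin Nγ → ℝ,
      (∀ t ∈ Icc (0:ℝ) T,
        M1 *ᵥ Φ1' t + G1ᵀ *ᵥ μ t = f1 (Φ1 t) ∧
        M2 *ᵥ Φ2' t - G2ᵀ *ᵥ μ t = f2 (Φ2 t) ∧
        G1 *ᵥ Φ1' t - G2 *ᵥ Φ2' t = 0) →
      ∀ t ∈ Icc (0:ℝ) T, μ t = lam (Φ1 t) (Φ2 t) := by
    intro μ hμ t ht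
    obtain ⟨e1, e2, e3⟩ := hμ t ht
    rw [hlam]
    exact ivr_key M1 M2 G1 G2 hM1 hM2 hS _ _ _ _ _ e1 e2 e3
  refine ⟨⟨?_, ?_⟩, huniq⟩
  · intro h
    refine ⟨fun t => lam (Φ1 t) (Φ2 t), fun t ht => ?_⟩
    obtain ⟨h1, h2⟩ := h t ht
    refine ⟨by rw [h1]; abel, by rw [h2]; abel, ?_⟩
    have hv1 : Φ1' t = M1⁻¹ *ᵥ (f1 (Φ1 t) - G1ᵀ *ᵥ lam (Φ1 t) (Φ2 t)) := by
      rw [← h1, Matrix.mulVec_mulVec, Matrix.nonsing_inv_mul _ hM1, Matrix.one_mulVec]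
    have hv2 : Φ2' t = M2⁻¹ *ᵥ (f2 (Φ2 t) + G2ᵀ *ᵥ lam (Φ1 t) (Φ2 t)) := by
      rw [← h2, Matrix.mulVec_mulVec, Matrix.nonsing_inv_mul _ hM2, Matrix.one_mulVec]
    have hSL : (G1 * M1⁻¹ * G1ᵀ + G2 * M2⁻¹ * G2ᵀ) *ᵥ lam (Φ1 t) (Φ2 t)
        = G1 *ᵥ (M1⁻¹ *ᵥ f1 (Φ1 t)) - G2 *ᵥ (M2⁻¹ *ᵥ f2 (Φ2 t)) := by
      rw [hlam, Matrix.mulVec_mulVec, Matrix.mul_nonsing_inv _ hS, Matrix.one_mulVec]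
    have expand : G1 *ᵥ Φ1' t - G2 *ᵥ Φ2' t
        = (G1 *ᵥ (M1⁻¹ *ᵥ f1 (Φ1 t)) - G2 *ᵥ (M2⁻¹ *ᵥ f2 (Φ2 t)))
          - (G1 * M1⁻¹ * G1ᵀ + G2 * M2⁻¹ * G2ᵀ) *ᵥ lam (Φ1 t) (Φ2 t) := by
      rw [hv1, hv2]
      simp only [Matrix.mulVec_sub, Matrix.mulVec_add, Matrix.mulVec_mulVec,
        Matrix.add_mulVec, ← Matrix.mul_assoc]
      abel
    rw [expand, hSL, sub_self]
  · rintro ⟨μ, hμ⟩ t ht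
    obtain ⟨e1, e2, e3⟩ := hμ t ht
    have hm := huniq μ hμ t ht
    rw [← hm]
    exact ⟨eq_sub_of_add_eq e1, eq_add_of_sub_eq e2⟩
end

section
/- Let $M_1, M_2$ be invertible matrices, $G_1 \in \mathbb{R}^{N_\gamma \times N_1}$, $G_2 \in \mathbb{R}^{N_\gamma \times N_2}$, suppose $S := G_1 M_1^{-1} G_1^T + G_2 M_2^{-1} G_2^T$ is invertible, and let $\overline{\mathbf{f}}_i : \mathbb{R}^{N_i} \to \mathbb{R}^{N_i}$ be given functions. Fix $\Delta t > 0$ and define one step of the forward Euler IVR scheme: given $(\Phi_1^n, \Phi_2^n)$, set $\widetilde{f}_i^n := \overline{\mathbf{f}}_i(\Phi_i^n)$, $\lambda^n := S^{-1}(G_1 M_1^{-1} \widetilde{f}_1^n - G_2 M_2^{-1} \widetilde{f}_2^n)$, $\Phi_1^{n+1} := \Phi_1^n + \Delta t\, M_1^{-1}(\widetilde{f}_1^n - G_1^T \lambda^n)$ and $\Phi_2^{n+1} := \Phi_2^n + \Delta t\, M_2^{-1}(\widetilde{f}_2^n + G_2^T \lambda^n)$. Then the weak continuity constraint is preserved exactly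 at every step: if $G_1 \Phi_1^0 = G_2 \Phi_2^0$, then $G_1 \Phi_1^n = G_2 \Phi_2^n$ for all $n \geq 0$. -/
open Matrix

/-- The forward Euler IVR scheme preserves the weak continuity constraint
`G₁ Φ₁ⁿ = G₂ Φ₂ⁿ` exactly at every step. -/
theorem ivr_forward_euler_preserves_constraint
    {N1 N2 Nγ : ℕ}
    (M1 : Matrix (Fin N1) (Fin N1) ℝ) (M2 : Matrix (Fin N2) (Fin N2) ℝ)
    (G1 : Matrix (Fin Nγ) (Fin N1) ℝ) (G2 : Matrix (Fin Nγ) (Fin N2) ℝ)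
    (hM1 : IsUnit M1.det) (hM2 : IsUnit M2.det)
    (hS : IsUnit (G1 * M1⁻¹ * G1ᵀ + G2 * M2⁻¹ * G2ᵀ).det)
    (f1 : (Fin N1 → ℝ) → (Fin N1 → ℝ)) (f2 : (Fin N2 → ℝ) → (Fin N2 → ℝ))
    (Δt : ℝ) (hΔt : 0 < Δt)
    (Φ1 : ℕ → Fin N1 → ℝ) (Φ2 : ℕ → Fin N2 → ℝ) (lam : ℕ → Fin Nγ → ℝ)
    (hlam : ∀ n, lam n = (G1 * M1⁻¹ * G1ᵀ + G2 * M2⁻¹ * G2ᵀ)⁻¹ *ᵥ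
        (G1 *ᵥ (M1⁻¹ *ᵥ f1 (Φ1 n)) - G2 *ᵥ (M2⁻¹ *ᵥ f2 (Φ2 n))))
    (hstep1 : ∀ n, Φ1 (n + 1) = Φ1 n + Δt • (M1⁻¹ *ᵥ (f1 (Φ1 n) - G1ᵀ *ᵥ lam n)))
    (hstep2 : ∀ n, Φ2 (n + 1) = Φ2 n + Δt • (M2⁻¹ *ᵥ (f2 (Φ2 n) + G2ᵀ *ᵥ lam n)))
    (hinit : G1 *ᵥ Φ1 0 = G2 *ᵥ Φ2 0) :
    ∀ n : ℕ, G1 *ᵥ Φ1 n = G2 *ᵥ Φ2 n := by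
  intro n
  induction n with
  | zero => exact hinit
  | succ n ih =>
    have hkey : (G1 * M1⁻¹ * G1ᵀ) *ᵥ lam n + (G2 * M2⁻¹ * G2ᵀ) *ᵥ lam n
        = (G1 * M1⁻¹) *ᵥ f1 (Φ1 n) - (G2 * M2⁻¹) *ᵥ f2 (Φ2 n) := by
      rw [← add_mulVec, hlam n, mulVec_mulVec, Matrix.mul_nonsing_inv _ hS, one_mulVec,
        ← mulVec_mulVec, ← mulVec_mulVec]
    rw [hstep1 n, hstep2 n, mulVec_add, mulVec_add, mulVec_smul, mulVec_smul, ih]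
    simp only [mulVec_sub, mulVec_add, mulVec_mulVec]
    simp only [Matrix.mul_assoc] at hkey ⊢
    funext i
    have h := congrFun hkey i
    simp only [Pi.add_apply, Pi.sub_apply, Pi.smul_apply, smul_eq_mul] at h ⊢
    linear_combination (-Δt) * h
end

section
/- Let $M_1, M_2$ be invertible matrices, $G_1 \in \mathbb{R}^{N_\gamma \times N_1}$, $G_2 \in \mathbb{R}^{N_\gamma \times N_2}$, suppose $S := G_1 M_1^{-1} G_1^T + G_2 M_2^{-1} G_2^T$ is invertible, let $\overline{\mathbf{f}}_i : \mathbb{R}^{N_i} \to \mathbb{R}^{N_i}$ be given functions, and define $\lambda(\Phi_1, \Phi_2) := S^{-1}(G_1 M_1^{-1} \overline{\mathbf{f}}_1(\Phi_1) - G_2 M_2^{-1} \overline{\mathbf{f}}_2(\Phi_2))$ and the decoupled vector field $F(\Phi_1, \Phi_2) := (M_1^{-1}(\overline{\mathbf{f}}_1(\Phi_1) - G_1^T \lambda(\Phi_1,\Phi_2)),\, M_2^{-1}(\overline{\mathbf{f}}_2(\Phi_2) + G_2^T \lambda(\Phi_1,\Phi_2)))$. Then for every vector $(\Phi_1,\Phi_2)$,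 the components $(k_1, k_2) = F(\Phi_1, \Phi_2)$ satisfy $G_1 k_1 = G_2 k_2$. Consequently, one step of any explicit $s$-stage Runge-Kutta method with coefficients $a_{ij}$ ($1 \le j < i \le s$) and weights $b_1, \dots, b_s$ applied to the ODE $\dot{y} = F(y)$ preserves the constraint exactly: if $G_1 \Phi_1^n = G_2 \Phi_2^n$, then the update $y^{n+1} = y^n + \Delta t \sum_{i=1}^s b_i k^{(i)}$ with stages $k^{(i)} = F(y^n + \Delta t \sum_{j<i} a_{ij} k^{(j)})$ satisfies $G_1 \Phi_1^{n+1} = G_2 \Phi_2^{n+1}$. -/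
open Matrix

/-- The decoupled IVR vector field always produces interface-compatible rates
(`G₁ k₁ = G₂ k₂`); consequently, one step of any explicit `s`-stage Runge–Kutta
method applied to the decoupled ODE preserves the constraint `G₁ Φ₁ = G₂ Φ₂`
exactly. -/
theorem ivr_runge_kutta_preserves_constraint
    {N1 N2 Nγ : ℕ}
    (M1 : Matrix (Fin N1) (Fin N1) ℝ) (M2 : Matrix (Fin N2) (Fin N2) ℝ)
    (G1 : Matrix (Fin Nγ) (Fin N1) ℝ) (G2 : Matrix (Fin Nγ) (Fin N2) ℝ)
    (hM1 : IsUnit M1.det) (hM2 : IsUnit M2.det)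
    (hS : IsUnit (G1 * M1⁻¹ * G1ᵀ + G2 * M2⁻¹ * G2ᵀ).det)
    (f1 : (Fin N1 → ℝ) → (Fin N1 → ℝ)) (f2 : (Fin N2 → ℝ) → (Fin N2 → ℝ))
    (lam : (Fin N1 → ℝ) → (Fin N2 → ℝ) → (Fin Nγ → ℝ))
    (hlam : ∀ p1 p2, lam p1 p2 = (G1 * M1⁻¹ * G1ᵀ + G2 * M2⁻¹ * G2ᵀ)⁻¹ *ᵥ
        (G1 *ᵥ (M1⁻¹ *ᵥ f1 p1) - G2 *ᵥ (M2⁻¹ *ᵥ f2 p2)))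
    (F : (Fin N1 → ℝ) × (Fin N2 → ℝ) → (Fin N1 → ℝ) × (Fin N2 → ℝ))
    (hF : ∀ y, F y = (M1⁻¹ *ᵥ (f1 y.1 - G1ᵀ *ᵥ lam y.1 y.2),
                      M2⁻¹ *ᵥ (f2 y.2 + G2ᵀ *ᵥ lam y.1 y.2))) :
    (∀ y : (Fin N1 → ℝ) × (Fin N2 → ℝ), G1 *ᵥ (F y).1 = G2 *ᵥ (F y).2) ∧
    (∀ (s : ℕ) (a : Fin s → Fin s → ℝ) (b : Fin s → ℝ) (Δt : ℝ)
        (yn : (Fin N1 → ℝ) × (Fin N2 → ℝ))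
        (k : Fin s → (Fin N1 → ℝ) × (Fin N2 → ℝ)),
      (∀ i : Fin s, k i = F (yn + Δt • ∑ j ∈ Finset.Iio i, a i j • k j)) →
      G1 *ᵥ yn.1 = G2 *ᵥ yn.2 →
      G1 *ᵥ (yn + Δt • ∑ i, b i • k i).1 = G2 *ᵥ (yn + Δt • ∑ i, b i • k i).2) := by
  have key : ∀ y : (Fin N1 → ℝ) × (Fin N2 → ℝ), G1 *ᵥ (F y).1 = G2 *ᵥ (F y).2 := by
    intro y
    set S := G1 * M1⁻¹ * G1ᵀ + G2 * M2⁻¹ * G2ᵀ with hSdef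
    set v := G1 *ᵥ (M1⁻¹ *ᵥ f1 y.1) - G2 *ᵥ (M2⁻¹ *ᵥ f2 y.2) with hvdef
    have hL : lam y.1 y.2 = S⁻¹ *ᵥ v := hlam y.1 y.2
    have hv : G1 *ᵥ (M1⁻¹ *ᵥ (G1ᵀ *ᵥ lam y.1 y.2))
        + G2 *ᵥ (M2⁻¹ *ᵥ (G2ᵀ *ᵥ lam y.1 y.2)) = v := by
      have : S *ᵥ lam y.1 y.2 = v := by
        rw [hL, Matrix.mulVec_mulVec, Matrix.mul_nonsing_inv S hS, Matrix.one_mulVec]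
      calc G1 *ᵥ (M1⁻¹ *ᵥ (G1ᵀ *ᵥ lam y.1 y.2))
            + G2 *ᵥ (M2⁻¹ *ᵥ (G2ᵀ *ᵥ lam y.1 y.2))
          = S *ᵥ lam y.1 y.2 := by
            rw [hSdef, Matrix.add_mulVec]
            simp [Matrix.mulVec_mulVec, Matrix.mul_assoc]
        _ = v := this
    rw [hF]
    simp only [Matrix.mulVec_sub, Matrix.mulVec_add]
    have h1 : G1 *ᵥ (M1⁻¹ *ᵥ (f1 y.1 - G1ᵀ *ᵥ lam y.1 y.2))
        = G1 *ᵥ (M1⁻¹ *ᵥ f1 y.1) - G1 *ᵥ (M1⁻¹ *ᵥ (G1ᵀ *ᵥ lam y.1 y.2)) := by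
      rw [Matrix.mulVec_sub, Matrix.mulVec_sub]
    have h2 : G2 *ᵥ (M2⁻¹ *ᵥ (f2 y.2 + G2ᵀ *ᵥ lam y.1 y.2))
        = G2 *ᵥ (M2⁻¹ *ᵥ f2 y.2) + G2 *ᵥ (M2⁻¹ *ᵥ (G2ᵀ *ᵥ lam y.1 y.2)) := by
      rw [Matrix.mulVec_add, Matrix.mulVec_add]
    have := hv
    rw [hvdef] at this
    linear_combination -this
  refine ⟨key, ?_⟩
  intro s a b Δt yn k hk h0
  have hki : ∀ i : Fin s, G1 *ᵥ (k i).1 = G2 *ᵥ (k i).2 := by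
    intro i; rw [hk i]; exact key _
  simp only [Prod.fst_add, Prod.snd_add, Prod.smul_fst, Prod.smul_snd,
    Prod.fst_sum, Prod.snd_sum, Matrix.mulVec_add, Matrix.mulVec_smul, h0]
  congr 1
  congr 1
  have e1 : G1 *ᵥ ∑ x, b x • (k x).1 = ∑ x, b x • (G1 *ᵥ (k x).1) := by
    rw [← Matrix.mulVecLin_apply, map_sum]
    simp [Matrix.mulVecLin_apply, Matrix.mulVec_smul]
  have e2 : G2 *ᵥ ∑ x, b x • (k x).2 = ∑ x, b x • (G2 *ᵥ (k x).2) := by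
    rw [← Matrix.mulVecLin_apply, map_sum]
    simp [Matrix.mulVecLin_apply, Matrix.mulVec_smul]
  rw [e1, e2]
  simp [hki]
end

section
/- Let $M_2 \in \mathbb{R}^{N_2 \times N_2}$ be invertible, $G_1 \in \mathbb{R}^{N_\gamma \times N_1}$, $G_2 \in \mathbb{R}^{N_\gamma \times N_2}$, let $\widetilde{U}_0 \in \mathbb{R}^{N_1 \times N_R}$, set $\widetilde{G}_1 := G_1 \widetilde{U}_0$, let $\widetilde{M}_1 \in \mathbb{R}^{N_R \times N_R}$ be invertible, and suppose the ROM-FEM Schur complement $\widetilde{S} := \widetilde{G}_1 \widetilde{M}_1^{-1} \widetilde{G}_1^T + G_2 M_2^{-1} G_2^T$ is invertible. Fix $\Delta t > 0$ and arbitrary force vectors $\widetilde{f}_1^n \in \mathbb{R}^{N_R}$, $\widetilde{f}_2^n \in \mathbb{R}^{N_2}$, and define one forward Euler ROM-FEM IVR step: $\lambda^n := \widetilde{S}^{-1}(\widetilde{G}_1 \widetilde{M}_1^{-1} \widetilde{f}_1^n - G_2 M_2^{-1} \widetilde{f}_2^n)$, $\varphi_R^{n+1} := \varphi_R^n + \Delta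 t\, \widetilde{M}_1^{-1}(\widetilde{f}_1^n - \widetilde{G}_1^T \lambda^n)$, $\Phi_2^{n+1} := \Phi_2^n + \Delta t\, M_2^{-1}(\widetilde{f}_2^n + G_2^T \lambda^n)$. Then the reduced interface constraint is preserved exactly: if $\widetilde{G}_1 \varphi_R^n = G_2 \Phi_2^n$, then $\widetilde{G}_1 \varphi_R^{n+1} = G_2 \Phi_2^{n+1}$. -/
open Matrix

/-- One forward Euler step of the hybrid ROM-FEM IVR scheme preserves the reduced
interface constraint `G̃₁ φ_R = G₂ Φ₂` exactly. -/
theorem rom_fem_ivr_step_preserves_constraint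
    {N1 N2 Nγ NR : ℕ}
    (M2 : Matrix (Fin N2) (Fin N2) ℝ) (hM2 : IsUnit M2.det)
    (G1 : Matrix (Fin Nγ) (Fin N1) ℝ) (G2 : Matrix (Fin Nγ) (Fin N2) ℝ)
    (U0 : Matrix (Fin N1) (Fin NR) ℝ)
    (G1t : Matrix (Fin Nγ) (Fin NR) ℝ) (hG1t : G1t = G1 * U0)
    (M1t : Matrix (Fin NR) (Fin NR) ℝ) (hM1t : IsUnit M1t.det)
    (hS : IsUnit (G1t * M1t⁻¹ * G1tᵀ + G2 * M2⁻¹ * G2ᵀ).det)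
    (Δt : ℝ) (hΔt : 0 < Δt)
    (f1 : Fin NR → ℝ) (f2 : Fin N2 → ℝ)
    (φR : Fin NR → ℝ) (Φ2 : Fin N2 → ℝ)
    (lam : Fin Nγ → ℝ)
    (hlam : lam = (G1t * M1t⁻¹ * G1tᵀ + G2 * M2⁻¹ * G2ᵀ)⁻¹ *ᵥ
        (G1t *ᵥ (M1t⁻¹ *ᵥ f1) - G2 *ᵥ (M2⁻¹ *ᵥ f2)))
    (φR' : Fin NR → ℝ) (Φ2' : Fin N2 → ℝ)
    (hφR' : φR' = φR + Δt • (M1t⁻¹ *ᵥ (f1 - G1tᵀ *ᵥ lam)))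
    (hΦ2' : Φ2' = Φ2 + Δt • (M2⁻¹ *ᵥ (f2 + G2ᵀ *ᵥ lam)))
    (hconstraint : G1t *ᵥ φR = G2 *ᵥ Φ2) :
    G1t *ᵥ φR' = G2 *ᵥ Φ2' := by
  set S := G1t * M1t⁻¹ * G1tᵀ + G2 * M2⁻¹ * G2ᵀ with hSdef
  have hSlam : S *ᵥ lam = G1t *ᵥ (M1t⁻¹ *ᵥ f1) - G2 *ᵥ (M2⁻¹ *ᵥ f2) := by
    rw [hlam, mulVec_mulVec, Matrix.mul_nonsing_inv _ hS, one_mulVec]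
  have key : G1t *ᵥ (M1t⁻¹ *ᵥ (G1tᵀ *ᵥ lam)) + G2 *ᵥ (M2⁻¹ *ᵥ (G2ᵀ *ᵥ lam))
      = G1t *ᵥ (M1t⁻¹ *ᵥ f1) - G2 *ᵥ (M2⁻¹ *ᵥ f2) := by
    rw [← hSlam, hSdef, add_mulVec]
    simp [mulVec_mulVec, Matrix.mul_assoc]
  subst hφR' hΦ2'
  rw [mulVec_add, mulVec_add, mulVec_smul, mulVec_smul, hconstraint]
  congr 1
  rw [mulVec_sub, mulVec_add, mulVec_sub, mulVec_add]
  have := key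
  ext i
  have h := congrFun key i
  simp only [Pi.add_apply, Pi.sub_apply, Pi.smul_apply, smul_eq_mul] at h ⊢
  have : Δt * (((G1t *ᵥ M1t⁻¹ *ᵥ f1) i - (G1t *ᵥ M1t⁻¹ *ᵥ G1tᵀ *ᵥ lam) i) - ((G2 *ᵥ M2⁻¹ *ᵥ f2) i + (G2 *ᵥ M2⁻¹ *ᵥ G2ᵀ *ᵥ lam) i)) = 0 := by
    rw [mul_eq_zero]; right; linarith
  linarith [this, mul_sub Δt ((G1t *ᵥ M1t⁻¹ *ᵥ f1) i - (G1t *ᵥ M1t⁻¹ *ᵥ G1tᵀ *ᵥ lam) i) ((G2 *ᵥ M2⁻¹ *ᵥ f2) i + (G2 *ᵥ M2⁻¹ *ᵥ G2ᵀ *ᵥ lam) i)]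
end

section
/- For $j = 1,2$, let $\widetilde{M}_j \in \mathbb{R}^{N_{R,j} \times N_{R,j}}$ be invertible matrices, $\widetilde{G}_j \in \mathbb{R}^{N_\gamma \times N_{R,j}}$, and suppose the ROM-ROM Schur complement $\widetilde{S} := \widetilde{G}_1 \widetilde{M}_1^{-1} \widetilde{G}_1^T + \widetilde{G}_2 \widetilde{M}_2^{-1} \widetilde{G}_2^T$ is invertible. Fix $\Delta t > 0$ and arbitrary force vectors $\widetilde{f}_1^n \in \mathbb{R}^{N_{R,1}}$, $\widetilde{f}_2^n \in \mathbb{R}^{N_{R,2}}$, and define one forward Euler ROM-ROM IVR step: $\lambda^n := \widetilde{S}^{-1}(\widetilde{G}_1 \widetilde{M}_1^{-1} \widetilde{f}_1^n - \widetilde{G}_2 \widetilde{M}_2^{-1} \widetilde{f}_2^n)$, $\varphi_R^{n+1} := \varphi_R^n + \Delta t\, \widetilde{M}_1^{-1}(\widetilde{f}_1^n - \widetilde{G}_1^T \lambda^n)$, $\psi_R^{n+1} := \psi_R^n + \Delta t\, \widetilde{M}_2^{-1}(\widetilde{f}_2^n + \widetilde{G}_2^T \lambda^n)$. Then the reduced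 interface constraint is preserved exactly: if $\widetilde{G}_1 \varphi_R^n = \widetilde{G}_2 \psi_R^n$, then $\widetilde{G}_1 \varphi_R^{n+1} = \widetilde{G}_2 \psi_R^{n+1}$. -/
open Matrix

/-- One forward Euler step of the hybrid ROM-ROM IVR scheme preserves the reduced
interface constraint `G̃₁ φ_R = G̃₂ ψ_R` exactly. -/
theorem rom_rom_ivr_step_preserves_constraint
    {Nγ NR1 NR2 : ℕ}
    (M1t : Matrix (Fin NR1) (Fin NR1) ℝ) (hM1t : IsUnit M1t.det)
    (M2t : Matrix (Fin NR2) (Fin NR2) ℝ) (hM2t : IsUnit M2t.det)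
    (G1t : Matrix (Fin Nγ) (Fin NR1) ℝ) (G2t : Matrix (Fin Nγ) (Fin NR2) ℝ)
    (hS : IsUnit (G1t * M1t⁻¹ * G1tᵀ + G2t * M2t⁻¹ * G2tᵀ).det)
    (Δt : ℝ) (hΔt : 0 < Δt)
    (f1 : Fin NR1 → ℝ) (f2 : Fin NR2 → ℝ)
    (φR : Fin NR1 → ℝ) (ψR : Fin NR2 → ℝ)
    (lam : Fin Nγ → ℝ)
    (hlam : lam = (G1t * M1t⁻¹ * G1tᵀ + G2t * M2t⁻¹ * G2tᵀ)⁻¹ *ᵥ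
        (G1t *ᵥ (M1t⁻¹ *ᵥ f1) - G2t *ᵥ (M2t⁻¹ *ᵥ f2)))
    (φR' : Fin NR1 → ℝ) (ψR' : Fin NR2 → ℝ)
    (hφR' : φR' = φR + Δt • (M1t⁻¹ *ᵥ (f1 - G1tᵀ *ᵥ lam)))
    (hψR' : ψR' = ψR + Δt • (M2t⁻¹ *ᵥ (f2 + G2tᵀ *ᵥ lam)))
    (hconstraint : G1t *ᵥ φR = G2t *ᵥ ψR) :
    G1t *ᵥ φR' = G2t *ᵥ ψR' := by
  set S := G1t * M1t⁻¹ * G1tᵀ + G2t * M2t⁻¹ * G2tᵀ with hSdef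
  have hkey : S *ᵥ lam = G1t *ᵥ (M1t⁻¹ *ᵥ f1) - G2t *ᵥ (M2t⁻¹ *ᵥ f2) := by
    rw [hlam, mulVec_mulVec, Matrix.mul_nonsing_inv _ hS, one_mulVec]
  have hexp : G1t *ᵥ (M1t⁻¹ *ᵥ (f1 - G1tᵀ *ᵥ lam))
      = G2t *ᵥ (M2t⁻¹ *ᵥ (f2 + G2tᵀ *ᵥ lam)) := by
    have := hkey
    rw [hSdef, add_mulVec, ← mulVec_mulVec, ← mulVec_mulVec,
      ← mulVec_mulVec, ← mulVec_mulVec] at this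
    rw [mulVec_sub, mulVec_add, mulVec_sub, mulVec_add]
    have h2 : G1t *ᵥ (M1t⁻¹ *ᵥ f1) - (G1t *ᵥ (M1t⁻¹ *ᵥ (G1tᵀ *ᵥ lam))
        + G2t *ᵥ (M2t⁻¹ *ᵥ (G2tᵀ *ᵥ lam))) = G2t *ᵥ (M2t⁻¹ *ᵥ f2) := by
      rw [this]; abel
    rw [← h2]; abel
  rw [hφR', hψR', mulVec_add, mulVec_add, mulVec_smul, mulVec_smul,
    hconstraint, hexp]
end

section
/- Let $\widetilde{M}_1 \in \mathbb{R}^{N_R \times N_R}$ and $M_2 \in \mathbb{R}^{N_2 \times N_2}$ be invertible, $\widetilde{G}_1 \in \mathbb{R}^{N_\gamma \times N_R}$, $G_2 \in \mathbb{R}^{N_\gamma \times N_2}$, suppose $\widetilde{S} := \widetilde{G}_1 \widetilde{M}_1^{-1} \widetilde{G}_1^T + G_2 M_2^{-1} G_2^T$ is invertible, let $h_1 : \mathbb{R}^{N_R} \to \mathbb{R}^{N_R}$ and $h_2 : \mathbb{R}^{N_2} \to \mathbb{R}^{N_2}$ be given functions, and define $\widetilde{\lambda}(\varphi_R, \Phi_2)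 := \widetilde{S}^{-1}(\widetilde{G}_1 \widetilde{M}_1^{-1} h_1(\varphi_R) - G_2 M_2^{-1} h_2(\Phi_2))$. Let $\varphi_R : [0,T] \to \mathbb{R}^{N_R}$ and $\Phi_2 : [0,T] \to \mathbb{R}^{N_2}$ be differentiable. Then $(\varphi_R, \Phi_2)$ solves the decoupled ODE system $\widetilde{M}_1 \dot{\varphi}_R = h_1(\varphi_R) - \widetilde{G}_1^T \widetilde{\lambda}(\varphi_R, \Phi_2)$, $M_2 \dot{\Phi}_2 = h_2(\Phi_2) + G_2^T \widetilde{\lambda}(\varphi_R, \Phi_2)$ on $[0,T]$ if and only if there exists $\mu : [0,T] \to \mathbb{R}^{N_\gamma}$ such that $(\varphi_R, \Phi_2, \mu)$ solves the ROM-FEM index-1 DAE $\widetilde{M}_1 \dot{\varphi}_R + \widetilde{G}_1^T \mu = h_1(\varphi_R)$, $M_2 \dot{\Phi}_2 - G_2^T \mu = h_2(\Phi_2)$, $\widetilde{G}_1 \dot{\varphi}_R - G_2 \dot{\Phi}_2 = 0$ on $[0,T]$; moreover in that case $\mu(t) = \widetilde{\lambda}(\varphi_R(t), \Phi_2(t))$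 for all $t \in [0,T]$. -/
open Matrix Set

private lemma solve_mulVec {n : ℕ} (M : Matrix (Fin n) (Fin n) ℝ) (hM : IsUnit M.det)
    {x y : Fin n → ℝ} (h : M *ᵥ x = y) : x = M⁻¹ *ᵥ y := by
  rw [← h, Matrix.mulVec_mulVec, Matrix.nonsing_inv_mul M hM, Matrix.one_mulVec]

/-- Equivalence of the decoupled ROM-FEM ODE system (with the Lagrange multiplier
expressed as the implicit function `λ̃(φ_R,Φ₂)`) and the ROM-FEM index-1 DAE;
moreover any multiplier in the DAE equals `λ̃(φ_R(t),Φ₂(t))`. -/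
theorem rom_fem_decoupled_iff_dae
    {N2 Nγ NR : ℕ}
    (M1t : Matrix (Fin NR) (Fin NR) ℝ) (hM1t : IsUnit M1t.det)
    (M2 : Matrix (Fin N2) (Fin N2) ℝ) (hM2 : IsUnit M2.det)
    (G1t : Matrix (Fin Nγ) (Fin NR) ℝ) (G2 : Matrix (Fin Nγ) (Fin N2) ℝ)
    (hS : IsUnit (G1t * M1t⁻¹ * G1tᵀ + G2 * M2⁻¹ * G2ᵀ).det)
    (h1 : (Fin NR → ℝ) → (Fin NR → ℝ)) (h2 : (Fin N2 → ℝ) → (Fin N2 → ℝ))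
    (lam : (Fin NR → ℝ) → (Fin N2 → ℝ) → (Fin Nγ → ℝ))
    (hlam : ∀ p1 p2, lam p1 p2 = (G1t * M1t⁻¹ * G1tᵀ + G2 * M2⁻¹ * G2ᵀ)⁻¹ *ᵥ
        (G1t *ᵥ (M1t⁻¹ *ᵥ h1 p1) - G2 *ᵥ (M2⁻¹ *ᵥ h2 p2)))
    (T : ℝ) (hT : 0 < T)
    (φR : ℝ → Fin NR → ℝ) (Φ2 : ℝ → Fin N2 → ℝ)
    (φR' : ℝ → Fin NR → ℝ) (Φ2' : ℝ → Fin N2 → ℝ)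
    (hφR : ∀ t ∈ Icc (0:ℝ) T, HasDerivAt φR (φR' t) t)
    (hΦ2 : ∀ t ∈ Icc (0:ℝ) T, HasDerivAt Φ2 (Φ2' t) t) :
    ((∀ t ∈ Icc (0:ℝ) T,
        M1t *ᵥ φR' t = h1 (φR t) - G1tᵀ *ᵥ lam (φR t) (Φ2 t) ∧
        M2 *ᵥ Φ2' t = h2 (Φ2 t) + G2ᵀ *ᵥ lam (φR t) (Φ2 t)) ↔
      (∃ μ : ℝ → Fin Nγ → ℝ, ∀ t ∈ Icc (0:ℝ) T,
        M1t *ᵥ φR' t + G1tᵀ *ᵥ μ t = h1 (φR t) ∧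
        M2 *ᵥ Φ2' t - G2ᵀ *ᵥ μ t = h2 (Φ2 t) ∧
        G1t *ᵥ φR' t - G2 *ᵥ Φ2' t = 0)) ∧
    (∀ μ : ℝ → Fin Nγ → ℝ,
      (∀ t ∈ Icc (0:ℝ) T,
        M1t *ᵥ φR' t + G1tᵀ *ᵥ μ t = h1 (φR t) ∧
        M2 *ᵥ Φ2' t - G2ᵀ *ᵥ μ t = h2 (Φ2 t) ∧
        G1t *ᵥ φR' t - G2 *ᵥ Φ2' t = 0) →
      ∀ t ∈ Icc (0:ℝ) T, μ t = lam (φR t) (Φ2 t)) := by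
  set S : Matrix (Fin Nγ) (Fin Nγ) ℝ := G1t * M1t⁻¹ * G1tᵀ + G2 * M2⁻¹ * G2ᵀ with hSdef
  have hSv : ∀ v : Fin Nγ → ℝ, S *ᵥ v
      = G1t *ᵥ (M1t⁻¹ *ᵥ (G1tᵀ *ᵥ v)) + G2 *ᵥ (M2⁻¹ *ᵥ (G2ᵀ *ᵥ v)) := by
    intro v
    simp [hSdef, Matrix.add_mulVec, ← Matrix.mulVec_mulVec]
  have key : ∀ μ : ℝ → Fin Nγ → ℝ,
      (∀ t ∈ Icc (0:ℝ) T,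
        M1t *ᵥ φR' t + G1tᵀ *ᵥ μ t = h1 (φR t) ∧
        M2 *ᵥ Φ2' t - G2ᵀ *ᵥ μ t = h2 (Φ2 t) ∧
        G1t *ᵥ φR' t - G2 *ᵥ Φ2' t = 0) →
      ∀ t ∈ Icc (0:ℝ) T, μ t = lam (φR t) (Φ2 t) := by
    intro μ hμ t ht
    obtain ⟨e1, e2, e3⟩ := hμ t ht
    have hφ' : φR' t = M1t⁻¹ *ᵥ (h1 (φR t) - G1tᵀ *ᵥ μ t) :=
      solve_mulVec M1t hM1t (by rw [← e1]; abel)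
    have hΦ' : Φ2' t = M2⁻¹ *ᵥ (h2 (Φ2 t) + G2ᵀ *ᵥ μ t) :=
      solve_mulVec M2 hM2 (by rw [← e2]; abel)
    have hcon : G1t *ᵥ φR' t = G2 *ᵥ Φ2' t := by
      have := e3; rwa [sub_eq_zero] at this
    have hSμ : S *ᵥ μ t = G1t *ᵥ (M1t⁻¹ *ᵥ h1 (φR t)) - G2 *ᵥ (M2⁻¹ *ᵥ h2 (Φ2 t)) := by
      rw [hφ', hΦ'] at hcon
      rw [Matrix.mulVec_sub, Matrix.mulVec_add, Matrix.mulVec_sub, Matrix.mulVec_add] at hcon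
      rw [hSv]
      linear_combination (norm := module) -hcon
    have := solve_mulVec S hS hSμ
    rw [hlam, this]
  refine ⟨⟨?_, ?_⟩, key⟩
  · intro h
    refine ⟨fun t => lam (φR t) (Φ2 t), fun t ht => ?_⟩
    obtain ⟨e1, e2⟩ := h t ht
    refine ⟨by rw [e1]; abel, by rw [e2]; abel, ?_⟩
    have hφ' : φR' t = M1t⁻¹ *ᵥ (h1 (φR t) - G1tᵀ *ᵥ lam (φR t) (Φ2 t)) :=
      solve_mulVec M1t hM1t e1
    have hΦ' : Φ2' t = M2⁻¹ *ᵥ (h2 (Φ2 t) + G2ᵀ *ᵥ lam (φR t) (Φ2 t)) :=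
      solve_mulVec M2 hM2 e2
    have hSl : S *ᵥ lam (φR t) (Φ2 t)
        = G1t *ᵥ (M1t⁻¹ *ᵥ h1 (φR t)) - G2 *ᵥ (M2⁻¹ *ᵥ h2 (Φ2 t)) := by
      rw [hlam, Matrix.mulVec_mulVec, Matrix.mul_nonsing_inv S hS, Matrix.one_mulVec]
    rw [hφ', hΦ', Matrix.mulVec_sub, Matrix.mulVec_add, Matrix.mulVec_sub, Matrix.mulVec_add]
    rw [hSv] at hSl
    linear_combination (norm := module) -hSl
  · rintro ⟨μ, hμ⟩ t ht
    obtain ⟨e1, e2, e3⟩ := hμ t ht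
    have hμl := key μ hμ t ht
    rw [← hμl]
    exact ⟨by rw [← e1]; abel, by rw [← e2]; abel⟩
end
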